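/- (Addition theorem for q-Genocchi polynomials.) For all x, y ∈ ℂ and every integer n ≥ 0: G_{n,q}(x,y) = Σ_{k=0}^{n} [n choose k]_q g_{k,q} (x ⊕_q y)^{n−k}, and also G_{n,q}(x,y) = Σ_{k=0}^{n} [n choose k]_q ((−1;q)_{n−k}/2^{n−k}) G_{k,q}(x) y^{n−k}. -/

import Mathlib

/-
Since `𝓔_q(t) + 1` has constant term `2`, it is cancellable, so the defining identities say
`Σ G_{n,q}(x,y) tⁿ/[n]_q! = (Σ g_{n,q} tⁿ/[n]_q!) 𝓔_q(tx) 𝓔_q(ty)`. The product of two series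
`Σ aₙ tⁿ/[n]_q!` and `Σ bₙ tⁿ/[n]_q!` has coefficients the `q`-binomial convolution of `a` and `b`
(here `[n]_q! ≠ 0` because `q` is not a root of unity). Hence `𝓔_q(tx) 𝓔_q(ty)` generates
`(x ⊕_q y)ⁿ`, giving the first identity. For the second, group the product as
`(Σ g_{n,q} tⁿ/[n]_q! · 𝓔_q(tx)) · 𝓔_q(ty)`: as `𝓔_q(0) = 1`, the first factor generates `G_{n,q}(x)`.
-/

open Finset PowerSeries

/-- The `q`-number `[n]_q = (1 - q^n)/(1 - q)`. -/
noncomputable def qNum (q : ℂ) (n : ℕ) : ℂ := (1 - q ^ n) / (1 - q)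

/-- The `q`-factorial `[n]_q!`. -/
noncomputable def qFact (q : ℂ) : ℕ → ℂ
  | 0 => 1
  | n + 1 => qNum q (n + 1) * qFact q n

/-- The `q`-shifted factorial `(a; q)_n = ∏_{j=0}^{n-1} (1 - q^j a)`. -/
noncomputable def qShift (a q : ℂ) (n : ℕ) : ℂ := ∏ j ∈ Finset.range n, (1 - q ^ j * a)

/-- The Gaussian binomial coefficient `[n choose k]_q = (q;q)_n / ((q;q)_{n-k} (q;q)_k)`. -/
noncomputable def qBinom (q : ℂ) (n k : ℕ) : ℂ :=
  qShift q q n / (qShift q q (n - k) * qShift q q k)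

/-- The formal power series (in `t`) `𝓔_q(tx) = Σ_{n≥0} (-1;q)_n (x)^n t^n / (2^n [n]_q!)`. -/
noncomputable def qExp (q x : ℂ) : PowerSeries ℂ :=
  PowerSeries.mk fun n => qShift (-1) q n * x ^ n / (2 ^ n * qFact q n)

/-- The generating series `Σ_{n≥0} a_n t^n / [n]_q!` of a sequence `a`. -/
noncomputable def qGen (q : ℂ) (a : ℕ → ℂ) : PowerSeries ℂ :=
  PowerSeries.mk fun n => a n / qFact q n

/-- The `q`-addition `(x ⊕_q y)^n`. -/
noncomputable def qAdd (q x y : ℂ) (n : ℕ) : ℂ :=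
  ∑ k ∈ Finset.range (n + 1),
    qBinom q n k * (qShift (-1) q k * qShift (-1) q (n - k) / 2 ^ n) * x ^ k * y ^ (n - k)


section

variable {q : ℂ}

lemma pow_ne_one_of_not_isOfFinOrder (hq : ¬IsOfFinOrder q) {n : ℕ} (hn : n ≠ 0) : q ^ n ≠ 1 :=
  fun h => hq (isOfFinOrder_iff_pow_eq_one.2 ⟨n, Nat.pos_of_ne_zero hn, h⟩)

lemma ne_one_of_not_isOfFinOrder (hq : ¬IsOfFinOrder q) : q ≠ 1 := by
  rintro rfl
  exact hq IsOfFinOrder.one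

lemma qFact_ne_zero (hq : ¬IsOfFinOrder q) (n : ℕ) : qFact q n ≠ 0 := by
  induction n with
  | zero => simp [qFact]
  | succ n ih =>
    have hnum : (1 : ℂ) - q ^ (n + 1) ≠ 0 :=
      sub_ne_zero.2 (pow_ne_one_of_not_isOfFinOrder hq n.succ_ne_zero).symm
    have hden : (1 : ℂ) - q ≠ 0 := sub_ne_zero.2 (ne_one_of_not_isOfFinOrder hq).symm
    exact mul_ne_zero (div_ne_zero hnum hden) ih

lemma qShift_self (q : ℂ) (n : ℕ) : qShift q q n = (1 - q) ^ n * qFact q n := by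
  induction n with
  | zero => simp [qShift, qFact]
  | succ n ih =>
    rw [qShift, prod_range_succ, ← qShift, ih, qFact, qNum, ← pow_succ]
    rcases eq_or_ne q 1 with rfl | hq
    · simp
    · field_simp [sub_ne_zero.2 hq.symm]
      ring

lemma qBinom_eq_qFact_div (hq : q ≠ 1) {n k : ℕ} (hk : k ≤ n) :
    qBinom q n k = qFact q n / (qFact q k * qFact q (n - k)) := by
  have hpow : (1 - q) ^ (n - k) * (1 - q) ^ k = (1 - q) ^ n := by
    rw [← pow_add, Nat.sub_add_cancel hk]
  rw [qBinom, qShift_self, qShift_self, qShift_self, ← hpow,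
    show (1 - q) ^ (n - k) * qFact q (n - k) * ((1 - q) ^ k * qFact q k)
      = (1 - q) ^ (n - k) * (1 - q) ^ k * (qFact q k * qFact q (n - k)) by ring]
  have h1q : (1 : ℂ) - q ≠ 0 := sub_ne_zero.2 hq.symm
  exact mul_div_mul_left _ _ (mul_ne_zero (pow_ne_zero _ h1q) (pow_ne_zero _ h1q))

noncomputable def qConv (q : ℂ) (a b : ℕ → ℂ) (n : ℕ) : ℂ :=
  ∑ k ∈ range (n + 1), qBinom q n k * a k * b (n - k)

lemma qGen_injective (hq : ¬IsOfFinOrder q) : Function.Injective (qGen q) := by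
  intro a b h
  funext n
  have hn := congrArg (coeff n) h
  simp only [qGen, coeff_mk] at hn
  exact (div_left_inj' (qFact_ne_zero hq n)).1 hn

lemma qGen_mul_qGen (hq : ¬IsOfFinOrder q) (a b : ℕ → ℂ) :
    qGen q a * qGen q b = qGen q (qConv q a b) := by
  ext n
  rw [coeff_mul, Nat.sum_antidiagonal_eq_sum_range_succ_mk]
  simp only [qGen, coeff_mk, qConv, sum_div]
  refine sum_congr rfl fun k hk => ?_
  rw [qBinom_eq_qFact_div (ne_one_of_not_isOfFinOrder hq) (Nat.lt_succ_iff.1 (mem_range.1 hk))]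
  field_simp [qFact_ne_zero hq]

lemma qExp_eq_qGen (q x : ℂ) : qExp q x = qGen q fun n => qShift (-1) q n / 2 ^ n * x ^ n := by
  ext n
  simp only [qExp, qGen, coeff_mk]
  ring

lemma qExp_zero (q : ℂ) : qExp q 0 = 1 := by
  ext n
  cases n <;> simp [qExp, coeff_one, qShift, qFact]

lemma constantCoeff_qExp (q x : ℂ) : constantCoeff (qExp q x) = 1 := by
  simp [qExp, qShift, qFact]

lemma qExp_one_add_one_ne_zero (q : ℂ) : qExp q 1 + 1 ≠ 0 := fun h => by
  simpa [constantCoeff_qExp] using congrArg constantCoeff h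

lemma qExp_mul_qExp (hq : ¬IsOfFinOrder q) (x y : ℂ) :
    qExp q x * qExp q y = qGen q (qAdd q x y) := by
  rw [qExp_eq_qGen, qExp_eq_qGen, qGen_mul_qGen hq]
  congr 1
  funext n
  refine sum_congr rfl fun k hk => ?_
  rw [← Nat.add_sub_of_le (Nat.lt_succ_iff.1 (mem_range.1 hk)), pow_add, Nat.add_sub_cancel_left]
  ring

end

theorem qGenocchi_addition_general (q : ℂ) (hq1 : ‖q‖ < 1)
    (g : ℕ → ℂ) (hg : qGen q g * (qExp q 1 + 1) = 2 * PowerSeries.X)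
    (G : ℂ → ℂ → ℕ → ℂ)
    (hG : ∀ x y : ℂ, qGen q (G x y) * (qExp q 1 + 1) = 2 * PowerSeries.X * qExp q x * qExp q y)
    (x y : ℂ) (n : ℕ) :
    G x y n = ∑ k ∈ Finset.range (n + 1), qBinom q n k * g k * qAdd q x y (n - k) ∧
    G x y n = ∑ k ∈ Finset.range (n + 1),
      qBinom q n k * (qShift (-1) q (n - k) / 2 ^ (n - k)) * G x 0 k * y ^ (n - k) := by
  have hq : ¬IsOfFinOrder q := fun h => hq1.ne h.norm_eq_one
  have hgen (a b : ℂ) : qGen q (G a b) = qGen q g * (qExp q a * qExp q b) := by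
    refine mul_right_cancel₀ (qExp_one_add_one_ne_zero q) ?_
    rw [hG, ← hg]
    ring
  have hG_numbers : G x y = qConv q g (qAdd q x y) :=
    qGen_injective hq (by rw [hgen, qExp_mul_qExp hq, qGen_mul_qGen hq])
  have hG_polys : G x y = qConv q (G x 0) fun m => qShift (-1) q m / 2 ^ m * y ^ m := by
    refine qGen_injective hq ?_
    rw [← qGen_mul_qGen hq, ← qExp_eq_qGen, hgen, hgen, qExp_zero, mul_one, mul_assoc]
  refine ⟨congrFun hG_numbers n, ?_⟩
  rw [hG_polys, qConv]
  exact sum_congr rfl fun k _ => by ring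

/-- Addition theorem for the `q`-Genocchi polynomials `G_{n,q}(x,y)`, defined by
`(2t/(𝓔_q(t)+1)) 𝓔_q(tx) 𝓔_q(ty) = Σ_{n≥0} G_{n,q}(x,y) t^n/[n]_q!`, in terms of the
`q`-Genocchi numbers `g_{n,q}` defined by `2t/(𝓔_q(t)+1) = Σ_{n≥0} g_{n,q} t^n/[n]_q!`. -/
theorem qGenocchi_addition (q : ℂ) (hq0 : 0 < ‖q‖) (hq1 : ‖q‖ < 1)
    (g : ℕ → ℂ) (hg : qGen q g * (qExp q 1 + 1) = 2 * PowerSeries.X)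
    (G : ℂ → ℂ → ℕ → ℂ)
    (hG : ∀ x y : ℂ, qGen q (G x y) * (qExp q 1 + 1) = 2 * PowerSeries.X * qExp q x * qExp q y)
    (x y : ℂ) (n : ℕ) :
    G x y n = ∑ k ∈ Finset.range (n + 1), qBinom q n k * g k * qAdd q x y (n - k) ∧
    G x y n = ∑ k ∈ Finset.range (n + 1),
      qBinom q n k * (qShift (-1) q (n - k) / 2 ^ (n - k)) * G x 0 k * y ^ (n - k) :=
  qGenocchi_addition_general q hq1 g hg G hG x y n
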